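/- Let α ∈ (0,1) be irrational and let n ≥ 1 have Ostrowski representation (with respect to α) whose lowest nonzero digit has index L = k_0(n). Then ‖nα‖ > ‖q_{L+1}α‖, where q_k are the denominators of the convergents of α and ‖·‖ is the distance to the nearest integer. -/

import Mathlib

/-- Gauss-map iterates of `α`. -/
noncomputable def cfFrac (α : ℝ) : ℕ → ℝ
  | 0 => α
  | k + 1 => Int.fract (1 / cfFrac α k)

/-- Partial quotients of `α` (1-indexed, `cfA α 0 = 0` unused). -/
noncomputable def cfA (α : ℝ) : ℕ → ℕ
  | 0 => 0
  | k + 1 => (⌊1 / cfFrac α k⌋).toNat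

/-- Numerators of the convergents of `α`. -/
noncomputable def cfP (α : ℝ) : ℕ → ℕ
  | 0 => 0
  | 1 => 1
  | k + 2 => cfA α (k + 2) * cfP α (k + 1) + cfP α k

/-- Denominators of the convergents of `α`. -/
noncomputable def cfQ (α : ℝ) : ℕ → ℕ
  | 0 => 1
  | 1 => cfA α 1
  | k + 2 => cfA α (k + 2) * cfQ α (k + 1) + cfQ α k

/-- Distance from `x` to the nearest integer. -/
noncomputable def distNearInt (x : ℝ) : ℝ := min (Int.fract x) (1 - Int.fract x)

/-- `b` is the sequence of digits of an Ostrowski representation of `n` w.r.t. `α`: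
`n = Σ b_k q_k` with `0 ≤ b_0 ≤ a_1 - 1`, `0 ≤ b_k ≤ a_{k+1}` for `k ≥ 1`, and
`b_{k-1} = 0` whenever `b_k = a_{k+1}`. -/
def OstrowskiRep (α : ℝ) (n : ℕ) (b : ℕ → ℕ) : Prop :=
  b 0 ≤ cfA α 1 - 1 ∧
  (∀ k, 1 ≤ k → b k ≤ cfA α (k + 1)) ∧
  (∀ k, 1 ≤ k → b k = cfA α (k + 1) → b (k - 1) = 0) ∧
  ∃ N, (∀ k, N < k → b k = 0) ∧ n = ∑ k ∈ Finset.range (N + 1), b k * cfQ α k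

/-!
With `δ_{k+1} = |q_k α - p_k|` one has `q_k α - p_k = (-1)^k δ_{k+1}`, where `δ_{k+1}` is the
product of the first `k + 1` Gauss-map iterates, and `δ_k = a_{k+1} δ_{k+1} + δ_{k+2}`. Hence
`n α ≡ ±U_L (mod 1)` for the alternating tail `U_L = Σ_{k ≥ L} (-1)^(k-L) b_k δ_{k+1}` starting at
the lowest digit. The digit bounds give `-δ_{m+1} < U_m < δ_m` for `m ≥ 1`; combined with
`b_L ≥ 1` and `b_{L+1} < a_{L+2}` (Ostrowski's carry rule) they squeeze
`δ_{L+2} < U_L < 1 - δ_{L+2}`, so `‖nα‖ = min U_L (1 - U_L) > δ_{L+2} = ‖q_{L+1} α‖`.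
-/

theorem irrational_cfFrac {α : ℝ} (hirr : Irrational α) (k : ℕ) : Irrational (cfFrac α k) := by
  induction k with
  | zero => exact hirr
  | succ k ih =>
    rw [cfFrac, one_div, Int.fract]
    exact ih.inv.sub_intCast _

theorem cfFrac_mem_Ioo {α : ℝ} (hα : α ∈ Set.Ioo 0 1) (hirr : Irrational α) (k : ℕ) :
    cfFrac α k ∈ Set.Ioo 0 1 := by
  cases k with
  | zero => exact hα
  | succ k =>
    refine ⟨(Int.fract_nonneg _).lt_of_ne fun h => ?_, Int.fract_lt_one _⟩
    exact (irrational_cfFrac hirr (k + 1)).ne_zero (by rw [cfFrac, ← h])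

theorem distNearInt_intCast_add_neg_one_pow_mul (m : ℤ) (k : ℕ) {y : ℝ} (hy : y ∈ Set.Ioo 0 1) :
    distNearInt (m + (-1) ^ k * y) = min y (1 - y) := by
  rcases Nat.even_or_odd k with hk | hk
  · rw [hk.neg_one_pow, one_mul, distNearInt, Int.fract_intCast_add,
      Int.fract_eq_self.2 ⟨hy.1.le, hy.2⟩]
  · have h : (m : ℝ) + (-1) ^ k * y = ((m - 1 : ℤ) : ℝ) + (1 - y) := by
      rw [hk.neg_one_pow]; push_cast; ring
    rw [h, distNearInt, Int.fract_intCast_add,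
      Int.fract_eq_self.2 ⟨by linarith [hy.2], by linarith [hy.1]⟩, sub_sub_cancel, min_comm]

section Convergents

variable {α : ℝ}

theorem one_le_cfA (hθ : ∀ k, cfFrac α k ∈ Set.Ioo 0 1) (k : ℕ) : 1 ≤ cfA α (k + 1) := by
  have h : (1 : ℝ) ≤ 1 / cfFrac α k := (one_lt_one_div (hθ k).1 (hθ k).2).le
  have hfloor := Int.le_floor.2 (by exact_mod_cast h : ((1 : ℤ) : ℝ) ≤ 1 / cfFrac α k)
  rw [cfA]
  omega

theorem cfA_add_cfFrac (hθ : ∀ k, cfFrac α k ∈ Set.Ioo 0 1) (k : ℕ) :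
    (cfA α (k + 1) : ℝ) + cfFrac α (k + 1) = 1 / cfFrac α k := by
  have hfloor : (0 : ℤ) ≤ ⌊1 / cfFrac α k⌋ := by
    have ha := one_le_cfA hθ k
    rw [cfA] at ha
    omega
  rw [cfA, cfFrac, ← Int.cast_natCast, Int.toNat_of_nonneg hfloor, Int.floor_add_fract]

/-- `cfErr α (k + 1) = |q_k α - p_k|`, and `cfErr α 0 = 1` plays the role of `|q_{-1} α - p_{-1}|`. -/
noncomputable def cfErr (α : ℝ) (k : ℕ) : ℝ := ∏ i ∈ Finset.range k, cfFrac α i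

theorem cfErr_succ (k : ℕ) : cfErr α (k + 1) = cfErr α k * cfFrac α k :=
  Finset.prod_range_succ _ _

@[simp]
theorem cfErr_zero : cfErr α 0 = 1 :=
  Finset.prod_range_zero _

@[simp]
theorem cfErr_one : cfErr α 1 = α := by
  simp [cfErr_succ, cfFrac]

theorem cfErr_pos (hθ : ∀ k, cfFrac α k ∈ Set.Ioo 0 1) (k : ℕ) : 0 < cfErr α k :=
  Finset.prod_pos fun i _ => (hθ i).1

theorem cfErr_strictAnti (hθ : ∀ k, cfFrac α k ∈ Set.Ioo 0 1) : StrictAnti (cfErr α) :=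
  strictAnti_nat_of_succ_lt fun k => by
    rw [cfErr_succ]
    exact mul_lt_of_lt_one_right (cfErr_pos hθ k) (hθ k).2

theorem cfErr_eq_cfA_mul_add (hθ : ∀ k, cfFrac α k ∈ Set.Ioo 0 1) (k : ℕ) :
    cfErr α k = cfA α (k + 1) * cfErr α (k + 1) + cfErr α (k + 2) := by
  have h := cfA_add_cfFrac hθ k
  have hθk := (hθ k).1.ne'
  simp only [cfErr_succ]
  field_simp at h
  linear_combination -cfErr α k * h

theorem cfQ_mul_sub_cfP (hθ : ∀ k, cfFrac α k ∈ Set.Ioo 0 1) (k : ℕ) :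
    (cfQ α k : ℝ) * α - cfP α k = (-1) ^ k * cfErr α (k + 1) := by
  induction k using Nat.twoStepInduction with
  | zero => simp [cfQ, cfP]
  | one =>
    have h := cfErr_eq_cfA_mul_add hθ 0
    rw [cfErr_zero, cfErr_one] at h
    simp only [cfQ, cfP]
    linear_combination -h
  | more k ih₀ ih₁ =>
    have h := cfErr_eq_cfA_mul_add hθ (k + 1)
    simp only [cfQ, cfP]
    push_cast
    linear_combination (cfA α (k + 2) : ℝ) * ih₁ + ih₀ + (-1) ^ k * h

theorem cfErr_lt_half (hθ : ∀ k, cfFrac α k ∈ Set.Ioo 0 1) {k : ℕ} (hk : 2 ≤ k) :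
    cfErr α k < 1 / 2 := by
  refine lt_of_le_of_lt ((cfErr_strictAnti hθ).antitone hk) ?_
  have h := cfErr_eq_cfA_mul_add hθ 0
  have ha : (1 : ℝ) ≤ cfA α 1 := by exact_mod_cast one_le_cfA hθ 0
  have hlt := cfErr_strictAnti hθ (show 1 < 2 by norm_num)
  have hpos := cfErr_pos hθ 1
  rw [cfErr_zero] at h
  nlinarith

theorem distNearInt_cfQ_succ_mul (hθ : ∀ k, cfFrac α k ∈ Set.Ioo 0 1) (k : ℕ) :
    distNearInt (cfQ α (k + 1) * α) = cfErr α (k + 2) := by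
  have hpos := cfErr_pos hθ (k + 2)
  have hhalf := cfErr_lt_half hθ (show 2 ≤ k + 2 by omega)
  rw [← sub_add_cancel ((cfQ α (k + 1) : ℝ) * α) (cfP α (k + 1)), cfQ_mul_sub_cfP hθ, add_comm,
    ← Int.cast_natCast, distNearInt_intCast_add_neg_one_pow_mul _ _ ⟨hpos, by linarith⟩]
  exact min_eq_left (by linarith)

end Convergents

section OstrowskiTail

variable {α : ℝ} {b : ℕ → ℕ} {N : ℕ}

noncomputable def ostTail (α : ℝ) (b : ℕ → ℕ) (N m : ℕ) : ℝ :=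
  ∑ i ∈ Finset.range (N + 1 - m), (-1) ^ i * (b (m + i) * cfErr α (m + i + 1))

theorem ostTail_of_lt {m : ℕ} (hm : N < m) : ostTail α b N m = 0 := by
  rw [ostTail, Nat.sub_eq_zero_of_le hm, Finset.sum_range_zero]

theorem ostTail_eq_sub (hN : ∀ k, N < k → b k = 0) (m : ℕ) :
    ostTail α b N m = b m * cfErr α (m + 1) - ostTail α b N (m + 1) := by
  rcases lt_or_ge N m with hm | hm
  · rw [ostTail_of_lt hm, ostTail_of_lt (by omega), hN m hm]
    simp
  · rw [ostTail, ostTail, show N + 1 - m = N + 1 - (m + 1) + 1 by omega, Finset.sum_range_succ',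
      sub_eq_add_neg, ← Finset.sum_neg_distrib, add_comm]
    congr 1
    · simp
    · refine Finset.sum_congr rfl fun i _ => ?_
      rw [show m + (i + 1) = m + 1 + i by omega]
      ring

theorem ostTail_zero_eq_neg_one_pow_mul (hN : ∀ k, N < k → b k = 0) {L : ℕ}
    (hL : ∀ k < L, b k = 0) : ostTail α b N 0 = (-1) ^ L * ostTail α b N L := by
  induction L with
  | zero => simp
  | succ L ih =>
    rw [ih fun k hk => hL k (by omega), ostTail_eq_sub hN L, hL L (by omega)]
    ring

theorem ostTail_bounds (hθ : ∀ k, cfFrac α k ∈ Set.Ioo 0 1) (hN : ∀ k, N < k → b k = 0)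
    (hb : ∀ k, 1 ≤ k → b k ≤ cfA α (k + 1)) (m : ℕ) (hm : 1 ≤ m) :
    -cfErr α (m + 1) < ostTail α b N m ∧ ostTail α b N m < cfErr α m := by
  induction hd : N + 1 - m generalizing m with
  | zero =>
    rw [ostTail_of_lt (by omega)]
    exact ⟨neg_lt_zero.2 (cfErr_pos hθ _), cfErr_pos hθ m⟩
  | succ d ih =>
    obtain ⟨hlo, hhi⟩ := ih (m + 1) (by omega) (by omega)
    have hbm : (b m : ℝ) * cfErr α (m + 1) ≤ cfA α (m + 1) * cfErr α (m + 1) :=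
      mul_le_mul_of_nonneg_right (by exact_mod_cast hb m hm) (cfErr_pos hθ _).le
    have hbm₀ : 0 ≤ (b m : ℝ) * cfErr α (m + 1) := mul_nonneg (by positivity) (cfErr_pos hθ _).le
    have hrec := cfErr_eq_cfA_mul_add hθ m
    rw [ostTail_eq_sub hN m]
    constructor <;> linarith

theorem cfErr_lt_ostTail (hθ : ∀ k, cfFrac α k ∈ Set.Ioo 0 1) (hN : ∀ k, N < k → b k = 0)
    (hb : ∀ k, 1 ≤ k → b k ≤ cfA α (k + 1)) {L : ℕ} (hL : b L ≠ 0)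
    (hL₁ : b (L + 1) < cfA α (L + 2)) : cfErr α (L + 2) < ostTail α b N L := by
  have hU := (ostTail_bounds hθ hN hb (L + 2) (by omega)).1
  have hbL : (1 : ℝ) ≤ b L := by exact_mod_cast Nat.one_le_iff_ne_zero.2 hL
  have hbL₁ : (b (L + 1) : ℝ) + 1 ≤ cfA α (L + 2) := by exact_mod_cast hL₁
  have hrec := cfErr_eq_cfA_mul_add hθ (L + 1)
  have hE₁ := cfErr_pos hθ (L + 1)
  have hE₂ := cfErr_pos hθ (L + 2)
  rw [ostTail_eq_sub hN L, ostTail_eq_sub hN (L + 1)]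
  nlinarith

theorem ostTail_lt_one_sub (hθ : ∀ k, cfFrac α k ∈ Set.Ioo 0 1) (hN : ∀ k, N < k → b k = 0)
    (hb : ∀ k, 1 ≤ k → b k ≤ cfA α (k + 1)) (hb₀ : b 0 ≤ cfA α 1 - 1) (L : ℕ) :
    ostTail α b N L < 1 - cfErr α (L + 2) := by
  have hrec := cfErr_eq_cfA_mul_add hθ 0
  have ha : (1 : ℝ) ≤ cfA α 1 := by exact_mod_cast one_le_cfA hθ 0
  have hE₁ := cfErr_pos hθ 1
  rw [cfErr_zero] at hrec
  cases L with
  | zero =>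
    have hU := (ostTail_bounds hθ hN hb 1 le_rfl).1
    have hb₀' : (b 0 : ℝ) + 1 ≤ cfA α 1 := by
      have ha₁ : 1 ≤ cfA α 1 := one_le_cfA hθ 0
      exact_mod_cast (by omega : b 0 + 1 ≤ cfA α 1)
    have hE₂ := cfErr_strictAnti hθ (show 1 < 2 by omega)
    rw [ostTail_eq_sub hN 0]
    nlinarith
  | succ L =>
    have hU := (ostTail_bounds hθ hN hb (L + 1) (by omega)).2
    have h₁ := (cfErr_strictAnti hθ).antitone (show 1 ≤ L + 1 by omega)
    have h₂ := (cfErr_strictAnti hθ).antitone (show 2 ≤ L + 1 + 2 by omega)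
    nlinarith

theorem natCast_sum_mul_cfQ_mul_eq (hθ : ∀ k, cfFrac α k ∈ Set.Ioo 0 1)
    (hN : ∀ k, N < k → b k = 0) {L : ℕ} (hL : ∀ k < L, b k = 0) :
    ((∑ k ∈ Finset.range (N + 1), b k * cfQ α k : ℕ) : ℝ) * α =
      ((∑ k ∈ Finset.range (N + 1), b k * cfP α k : ℕ) : ℤ) + (-1) ^ L * ostTail α b N L := by
  rw [← ostTail_zero_eq_neg_one_pow_mul hN hL, ostTail, Nat.sub_zero]
  push_cast
  rw [Finset.sum_mul, ← Finset.sum_add_distrib]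
  refine Finset.sum_congr rfl fun k _ => ?_
  have h := cfQ_mul_sub_cfP hθ k
  rw [zero_add]
  linear_combination (b k : ℝ) * h

end OstrowskiTail

theorem stmt7_general (α : ℝ) (hα : α ∈ Set.Ioo (0:ℝ) 1) (hirr : Irrational α)
    (n : ℕ) (b : ℕ → ℕ) (hb : OstrowskiRep α n b)
    (L : ℕ) (hL : b L ≠ 0) (hL0 : ∀ k, k < L → b k = 0) :
    distNearInt ((cfQ α (L + 1) : ℝ) * α) < distNearInt ((n : ℝ) * α) := by
  have hθ := cfFrac_mem_Ioo hα hirr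
  obtain ⟨hb₀, hb, hcarry, N, hN, rfl⟩ := hb
  have hL₁ : b (L + 1) < cfA α (L + 2) :=
    (hb (L + 1) (by omega)).lt_of_ne fun h => hL (hcarry (L + 1) (by omega) h)
  have hlo := cfErr_lt_ostTail hθ hN hb hL hL₁
  have hhi := ostTail_lt_one_sub hθ hN hb hb₀ L
  have hpos := cfErr_pos hθ (L + 2)
  rw [distNearInt_cfQ_succ_mul hθ L, natCast_sum_mul_cfQ_mul_eq hθ hN hL0,
    distNearInt_intCast_add_neg_one_pow_mul _ _ ⟨by linarith, by linarith⟩]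
  exact lt_min hlo (by linarith)

theorem stmt7 (α : ℝ) (hα : α ∈ Set.Ioo (0:ℝ) 1) (hirr : Irrational α)
    (n : ℕ) (hn : 1 ≤ n) (b : ℕ → ℕ) (hb : OstrowskiRep α n b)
    (L : ℕ) (hL : b L ≠ 0) (hL0 : ∀ k, k < L → b k = 0) :
    distNearInt ((cfQ α (L + 1) : ℝ) * α) < distNearInt ((n : ℝ) * α) :=
  stmt7_general α hα hirr n b hb L hL hL0
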